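/- For all real numbers a, b with a ≥ b > 0, the perimeter of the ellipse admits the series representation p(a,b) = π·(a+b)·B(((a−b)/(a+b))²), and Ramanujan's approximation satisfies p_R(a,b) = π·(a+b)·A(((a−b)/(a+b))²). -/

import Mathlib

open Real

/-- The series `B(x) = ∑ ((1/(2n-1))·(1/4ⁿ)·C(2n,n))²·xⁿ`. -/
noncomputable def Bfun (x : ℝ) : ℝ :=
  ∑' n : ℕ, ((1 / (2 * (n : ℝ) - 1)) * (1 / 4 ^ n) * (Nat.choose (2 * n) n)) ^ 2 * x ^ n

/-- The function `A(x) = 1 + 3x/(10 + √(4 - 3x))`. -/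
noncomputable def Afun (x : ℝ) : ℝ := 1 + 3 * x / (10 + Real.sqrt (4 - 3 * x))

/-- The perimeter of an ellipse with semi-axes `a ≥ b > 0`. -/
noncomputable def ellipsePerimeter (a b : ℝ) : ℝ :=
  4 * ∫ φ in (0:ℝ)..(Real.pi / 2), Real.sqrt (a ^ 2 * Real.sin φ ^ 2 + b ^ 2 * Real.cos φ ^ 2)

/-- Ramanujan's approximation to the perimeter of an ellipse. -/
noncomputable def ramanujanPerimeter (a b : ℝ) : ℝ :=
  Real.pi * ((a + b) + 3 * (a - b) ^ 2 / (10 * (a + b) + Real.sqrt (a ^ 2 + 14 * a * b + b ^ 2)))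

/-!
With `k = (a - b)/(a + b)` one has `a² sin² φ + b² cos² φ = ((a + b)/2)² |1 - k e^{2iφ}|²`.
The coefficients `c n` of `B` are those of `-√(1 - z)`, so `(∑ c n zⁿ)² = 1 - z` (a Catalan
convolution) and `|1 - k e^{iθ}| = |∑ c n kⁿ e^{inθ}|²`. Integrating over `[0, π]`, the cross
terms `cos ((n - m) θ)` vanish and `π ∑ c n² k²ⁿ = π B(k²)` remains. Ramanujan's formula is
algebra, from `4 - 3k² = (a² + 14ab + b²)/(a + b)²`.
-/

open Finset

/-- The coefficients of `-√(1 - z)`. -/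
noncomputable def sqrtCoeff (n : ℕ) : ℝ :=
  1 / (2 * (n : ℝ) - 1) * (1 / 4 ^ n) * (Nat.choose (2 * n) n)

lemma Bfun_eq_tsum (x : ℝ) : Bfun x = ∑' n, sqrtCoeff n ^ 2 * x ^ n := rfl

lemma sqrtCoeff_zero : sqrtCoeff 0 = -1 := by
  simp [sqrtCoeff]

lemma centralBinom_succ_eq_mul_catalan (n : ℕ) :
    Nat.centralBinom (n + 1) = 2 * (2 * n + 1) * catalan n := by
  have h := Nat.succ_mul_centralBinom_succ n
  rw [← succ_mul_catalan_eq_centralBinom n] at h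
  exact Nat.eq_of_mul_eq_mul_left n.succ_pos (by rw [h, Nat.succ_eq_add_one]; ring)

lemma sqrtCoeff_succ (n : ℕ) : sqrtCoeff (n + 1) = 2 * catalan n / 4 ^ (n + 1) := by
  have hodd : 2 * ((n + 1 : ℕ) : ℝ) - 1 = 2 * n + 1 := by push_cast; ring
  rw [sqrtCoeff, ← Nat.centralBinom_eq_two_mul_choose, centralBinom_succ_eq_mul_catalan, hodd]
  push_cast
  field_simp

lemma abs_sqrtCoeff_le_one (n : ℕ) : |sqrtCoeff n| ≤ 1 := by
  have hodd : 1 ≤ |2 * (n : ℝ) - 1| := by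
    rcases n with _ | n
    · norm_num
    · rw [abs_of_nonneg (by push_cast; linarith)]; push_cast; linarith
  have hbinom : ((2 * n).choose n : ℝ) ≤ 4 ^ n := by
    exact_mod_cast Nat.centralBinom_eq_two_mul_choose n ▸ Nat.centralBinom_le_four_pow n
  rw [sqrtCoeff, abs_mul, abs_mul, abs_div, abs_div, abs_one,
    abs_of_pos (by positivity : (0:ℝ) < 4 ^ n), Nat.abs_cast]
  calc 1 / |2 * (n : ℝ) - 1| * (1 / 4 ^ n) * ((2 * n).choose n : ℝ)
      ≤ 1 * (1 / 4 ^ n) * 4 ^ n := by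
        gcongr
        exact div_le_one_of_le₀ hodd (abs_nonneg _)
    _ = 1 := by field_simp

lemma sqrtCoeff_series_sq : PowerSeries.mk sqrtCoeff ^ 2 = 1 - PowerSeries.X := by
  ext n
  rw [sq, PowerSeries.coeff_mul]
  simp only [PowerSeries.coeff_mk, map_sub, PowerSeries.coeff_one, PowerSeries.coeff_X]
  rcases n with _ | _ | n
  · simp [sqrtCoeff_zero]
  · norm_num [Nat.sum_antidiagonal_succ, sqrtCoeff_zero, sqrtCoeff_succ]
  · rw [Nat.sum_antidiagonal_succ, Nat.sum_antidiagonal_succ']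
    simp only [sqrtCoeff_succ, sqrtCoeff_zero, catalan_succ']
    have hterm : ∀ p ∈ antidiagonal n,
        2 * (catalan p.1 : ℝ) / 4 ^ (p.1 + 1) * (2 * catalan p.2 / 4 ^ (p.2 + 1))
          = 4 * (catalan p.1 * catalan p.2 : ℕ) / 4 ^ (n + 2) := by
      rintro ⟨i, j⟩ hij
      rw [HasAntidiagonal.mem_antidiagonal] at hij
      subst hij
      push_cast
      ring
    rw [sum_congr rfl hterm, ← sum_div, ← mul_sum, ← Nat.cast_sum]
    simp only [Nat.add_eq_zero_iff, one_ne_zero, and_false, if_false, Nat.add_eq_right]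
    ring

lemma summable_abs_sqrtCoeff_mul_pow {r : ℝ} (hr₀ : 0 ≤ r) (hr₁ : r < 1) :
    Summable fun n => |sqrtCoeff n| * r ^ n :=
  .of_nonneg_of_le (fun n => by positivity)
    (fun n => mul_le_of_le_one_left (by positivity) (abs_sqrtCoeff_le_one n))
    (summable_geometric_of_lt_one hr₀ hr₁)

lemma tsum_sqrtCoeff_mul_pow_sq {z : ℂ} (hz : ‖z‖ < 1) :
    (∑' n, (sqrtCoeff n : ℂ) * z ^ n) ^ 2 = 1 - z := by
  have hsum : Summable fun n => ‖(sqrtCoeff n : ℂ) * z ^ n‖ := by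
    simpa [norm_mul, norm_pow] using summable_abs_sqrtCoeff_mul_pow (norm_nonneg z) hz
  have hcoeff (n : ℕ) :
      ∑ p ∈ antidiagonal n, (sqrtCoeff p.1 : ℂ) * z ^ p.1 * (sqrtCoeff p.2 * z ^ p.2)
      = (PowerSeries.coeff n (PowerSeries.mk sqrtCoeff ^ 2) : ℝ) * z ^ n := by
    rw [sq, PowerSeries.coeff_mul, Complex.ofReal_sum, sum_mul]
    refine sum_congr rfl fun p hp => ?_
    rw [← HasAntidiagonal.mem_antidiagonal.mp hp, pow_add]
    simp only [PowerSeries.coeff_mk, Complex.ofReal_mul]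
    ring
  rw [sq, tsum_mul_tsum_eq_tsum_sum_antidiagonal_of_summable_norm hsum hsum]
  simp_rw [hcoeff, sqrtCoeff_series_sq]
  rw [tsum_eq_sum (s := range 2)]
  · simp [sum_range_succ, PowerSeries.coeff_one, PowerSeries.coeff_X, sub_eq_add_neg]
  · intro n hn
    have hn' : n ≠ 0 ∧ n ≠ 1 := by simp only [mem_range] at hn; omega
    simp [PowerSeries.coeff_one, PowerSeries.coeff_X, hn']

lemma integral_cos_nat_sub_mul (n m : ℕ) :
    ∫ θ in (0:ℝ)..π, cos (((n : ℝ) - m) * θ) = if n = m then π else 0 := by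
  split_ifs with h
  · simp [h]
  · have hc : (n : ℝ) - m ≠ 0 := sub_ne_zero.mpr (by exact_mod_cast h)
    have hsin : sin (((n : ℝ) - m) * π) = 0 := by
      simpa using sin_int_mul_pi ((n : ℤ) - m)
    simp [intervalIntegral.integral_comp_mul_left (fun θ => cos θ) hc, hsin]

lemma hasSum_normSq_tsum_mul_exp {a : ℕ → ℝ} (ha : Summable fun n => |a n|) (θ : ℝ) :
    HasSum (fun p : ℕ × ℕ => a p.1 * a p.2 * cos (((p.1 : ℝ) - p.2) * θ))
      (Complex.normSq (∑' n : ℕ, (a n : ℂ) * Complex.exp ((n * θ : ℝ) * Complex.I))) := by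
  set f : ℕ → ℂ := fun n => (a n : ℂ) * Complex.exp ((n * θ : ℝ) * Complex.I)
  have hf : Summable fun n => ‖f n‖ := by
    simpa only [f, norm_mul, Complex.norm_real, Complex.norm_exp_ofReal_mul_I, mul_one,
      Real.norm_eq_abs] using ha
  have hfc : Summable fun n => ‖(starRingEnd ℂ) (f n)‖ := by simpa only [Complex.norm_conj] using hf
  have hre := Complex.hasSum_re <| hf.of_norm.hasSum.mul hfc.of_norm.hasSum
    (summable_mul_of_summable_norm (f := f) (g := fun n => (starRingEnd ℂ) (f n)) hf hfc)
  rw [← Complex.conj_tsum, Complex.mul_conj, Complex.ofReal_re] at hre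
  refine hre.congr_fun fun p => ?_
  simp only [f, map_mul, Complex.conj_ofReal, Complex.mul_re, Complex.mul_im, Complex.conj_re,
    Complex.conj_im, Complex.ofReal_re, Complex.ofReal_im, Complex.exp_ofReal_mul_I_re,
    Complex.exp_ofReal_mul_I_im]
  rw [sub_mul, cos_sub]
  ring

lemma hasSum_integral_normSq_tsum_mul_exp {a : ℕ → ℝ} (ha : Summable fun n => |a n|) :
    HasSum (fun n => π * a n ^ 2)
      (∫ θ in (0:ℝ)..π,
        Complex.normSq (∑' n : ℕ, (a n : ℂ) * Complex.exp ((n * θ : ℝ) * Complex.I))) := by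
  have hterms := intervalIntegral.hasSum_integral_of_dominated_convergence
    (μ := MeasureTheory.volume) (a := 0) (b := π)
    (F := fun (p : ℕ × ℕ) θ => a p.1 * a p.2 * cos (((p.1 : ℝ) - p.2) * θ))
    (fun p _ => |a p.1| * |a p.2|)
    (fun p => (by fun_prop : Continuous _).aestronglyMeasurable)
    (fun p => .of_forall fun θ _ => by
      rw [norm_mul, Real.norm_eq_abs, abs_mul]
      exact mul_le_of_le_one_right (by positivity) (abs_cos_le_one _))
    (.of_forall fun _ _ => ha.mul_of_nonneg ha (fun _ => abs_nonneg _) (fun _ => abs_nonneg _))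
    intervalIntegrable_const
    (.of_forall fun θ _ => hasSum_normSq_tsum_mul_exp ha θ)
  simp only [intervalIntegral.integral_const_mul, integral_cos_nat_sub_mul, mul_ite, mul_zero]
    at hterms
  -- orthogonality of the cosines leaves only the diagonal `p = (n, n)`
  rw [← (Function.Injective.hasSum_iff (g := fun n : ℕ => (n, n)) ?_ ?_)] at hterms
  · simpa only [Function.comp_def, if_true, sq, mul_comm π] using hterms
  · exact fun m n h => congrArg Prod.fst h
  · rintro ⟨m, n⟩ hmn
    rw [if_neg]
    rintro (rfl : m = n)
    exact hmn ⟨m, rfl⟩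

lemma normSq_one_sub_ofReal_mul_exp (k θ : ℝ) :
    Complex.normSq (1 - k * Complex.exp (θ * Complex.I)) = 1 + k ^ 2 - 2 * k * cos θ := by
  rw [Complex.normSq_apply]
  simp only [Complex.sub_re, Complex.sub_im, Complex.one_re, Complex.one_im,
    Complex.re_ofReal_mul, Complex.im_ofReal_mul, Complex.exp_ofReal_mul_I_re,
    Complex.exp_ofReal_mul_I_im]
  linear_combination k ^ 2 * sin_sq_add_cos_sq θ

lemma sqrt_one_add_sq_sub_two_mul_cos {k : ℝ} (hk : |k| < 1) (θ : ℝ) :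
    √(1 + k ^ 2 - 2 * k * cos θ) =
      Complex.normSq (∑' n : ℕ, ((sqrtCoeff n * k ^ n : ℝ) : ℂ) *
        Complex.exp ((n * θ : ℝ) * Complex.I)) := by
  set z : ℂ := k * Complex.exp (θ * Complex.I)
  have hz : ‖z‖ < 1 := by
    rwa [norm_mul, Complex.norm_exp_ofReal_mul_I, mul_one, Complex.norm_real, Real.norm_eq_abs]
  have hseries : ∑' n : ℕ, ((sqrtCoeff n * k ^ n : ℝ) : ℂ) * Complex.exp ((n * θ : ℝ) * Complex.I)
      = ∑' n : ℕ, (sqrtCoeff n : ℂ) * z ^ n := by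
    refine tsum_congr fun n => ?_
    rw [mul_pow, ← Complex.exp_nat_mul]
    push_cast
    ring_nf
  rw [hseries, eq_comm, ← sqrt_sq (Complex.normSq_nonneg _), ← map_pow,
    tsum_sqrtCoeff_mul_pow_sq hz, normSq_one_sub_ofReal_mul_exp]

theorem integral_sqrt_one_add_sq_sub_two_mul_cos {k : ℝ} (hk : |k| < 1) :
    ∫ θ in (0:ℝ)..π, √(1 + k ^ 2 - 2 * k * cos θ) = π * Bfun (k ^ 2) := by
  have hsum : Summable fun n => |sqrtCoeff n * k ^ n| := by
    simpa only [abs_mul, abs_pow] using summable_abs_sqrtCoeff_mul_pow (abs_nonneg k) hk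
  simp_rw [sqrt_one_add_sq_sub_two_mul_cos hk, ← (hasSum_integral_normSq_tsum_mul_exp hsum).tsum_eq,
    tsum_mul_left, Bfun_eq_tsum, mul_pow, ← pow_mul, mul_comm 2]

lemma sq_mul_sin_sq_add_sq_mul_cos_sq {a b : ℝ} (h : a + b ≠ 0) (φ : ℝ) :
    a ^ 2 * sin φ ^ 2 + b ^ 2 * cos φ ^ 2 =
      ((a + b) / 2) ^ 2 *
        (1 + ((a - b) / (a + b)) ^ 2 - 2 * ((a - b) / (a + b)) * cos (2 * φ)) := by
  rw [cos_two_mul, sin_sq]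
  field_simp
  ring

lemma ellipsePerimeter_eq_integral {a b : ℝ} (h : 0 < a + b) :
    ellipsePerimeter a b = (a + b) *
      ∫ θ in (0:ℝ)..π, √(1 + ((a - b) / (a + b)) ^ 2 - 2 * ((a - b) / (a + b)) * cos θ) := by
  simp_rw [ellipsePerimeter, sq_mul_sin_sq_add_sq_mul_cos_sq h.ne', sqrt_mul (sq_nonneg _),
    sqrt_sq (half_pos h).le, intervalIntegral.integral_const_mul,
    intervalIntegral.integral_comp_mul_left (fun θ => √(1 + ((a - b) / (a + b)) ^ 2
      - 2 * ((a - b) / (a + b)) * cos θ)) two_ne_zero]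
  rw [mul_zero, mul_div_cancel₀ π two_ne_zero, smul_eq_mul]
  ring

lemma ramanujanPerimeter_eq {a b : ℝ} (h : 0 < a + b) :
    ramanujanPerimeter a b = π * (a + b) * Afun (((a - b) / (a + b)) ^ 2) := by
  have hsqrt : √(4 - 3 * ((a - b) / (a + b)) ^ 2) = √(a ^ 2 + 14 * a * b + b ^ 2) / (a + b) := by
    rw [show 4 - 3 * ((a - b) / (a + b)) ^ 2 = (a ^ 2 + 14 * a * b + b ^ 2) / (a + b) ^ 2 by
      field_simp; ring, sqrt_div' _ (sq_nonneg _), sqrt_sq h.le]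
  have hden : 0 < 10 * (a + b) + √(a ^ 2 + 14 * a * b + b ^ 2) := by positivity
  rw [ramanujanPerimeter, Afun, hsqrt]
  field_simp

theorem perimeter_series_representations (a b : ℝ) (hab : a ≥ b) (hb : b > 0) :
    ellipsePerimeter a b = Real.pi * (a + b) * Bfun (((a - b) / (a + b)) ^ 2) ∧
    ramanujanPerimeter a b = Real.pi * (a + b) * Afun (((a - b) / (a + b)) ^ 2) := by
  have hsum : 0 < a + b := by linarith
  have hk : |(a - b) / (a + b)| < 1 := by
    rw [abs_div, abs_of_pos hsum, div_lt_one hsum, abs_lt]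
    constructor <;> linarith
  refine ⟨?_, ramanujanPerimeter_eq hsum⟩
  rw [ellipsePerimeter_eq_integral hsum, integral_sqrt_one_add_sq_sub_two_mul_cos hk]
  ring
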